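/- Symmetry of the delay property: in a separated weak Büchi game, the environment's winning region also satisfies the delay property: if the environment wins from (i0, o0), there is a path from o0 to o_n in G_O, and a path from i_{-m} to i0 in G_I, then the environment wins from (i_{-m}, o_n). -/
import Mathlib


open scoped Classical

/-- Reachability: reflexive-transitive closure of the edge relation. -/
def Reach {V : Type*} (E : V → V → Prop) : V → V → Prop := Relation.ReflTransGen E

/-- Two vertices lie in the same strongly connected component: mutual reachability. -/
def SameSCC {V : Type*} (E : V → V → Prop) (s t : V) : Prop := Reach E s t ∧ Reach E t s

/-- Edge relation of the product of two directed graphs (componentwise). -/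
def prodEdge {I O : Type*} (EI : I → I → Prop) (EO : O → O → Prop) :
    I × O → I × O → Prop := fun p q => EI p.1 q.1 ∧ EO p.2 q.2

/-- A system strategy: given the history of states so far and the new environment
input, choose the new output. -/
abbrev Strat (I O : Type*) := List (I × O) → I → O

/-- The history (prefix) of a play up to and including position `n`. -/
def hist {I O : Type*} (π : ℕ → I × O) (n : ℕ) : List (I × O) := (List.range (n + 1)).map π

/-- A play is consistent with system strategy `f` from state `s`. -/
def Consistent {I O : Type*} (f : Strat I O) (s : I × O) (π : ℕ → I × O) : Prop :=
  π 0 = s ∧ ∀ n, (π (n + 1)).2 = f (hist π n) (π (n + 1)).1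

/-- All environment moves along the play are edges of the input graph. -/
def EnvLegal {I O : Type*} (EI : I → I → Prop) (π : ℕ → I × O) : Prop :=
  ∀ n, EI (π n).1 (π (n + 1)).1

/-- All system moves along the play are edges of the output graph. -/
def SysLegal {I O : Type*} (EO : O → O → Prop) (π : ℕ → I × O) : Prop :=
  ∀ n, EO (π n).2 (π (n + 1)).2

/-- The play satisfies `P` infinitely often. -/
def InfOften {V : Type*} (P : V → Prop) (π : ℕ → V) : Prop := ∀ N, ∃ n, N ≤ n ∧ P (π n)

/-- `f` is a winning system strategy for the Büchi condition `GF acc` from `s`: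
every play from `s` consistent with `f` in which the environment moves legally has
legal system moves and visits `acc` infinitely often. -/
def WinningFrom {I O : Type*} (EI : I → I → Prop) (EO : O → O → Prop)
    (acc : I × O → Prop) (f : Strat I O) (s : I × O) : Prop :=
  ∀ π : ℕ → I × O, Consistent f s π → EnvLegal EI π →
    SysLegal EO π ∧ InfOften acc π

/-- The system can win the weak Büchi game `GF acc` from `s`. -/
def SysWins {I O : Type*} (EI : I → I → Prop) (EO : O → O → Prop)
    (acc : I × O → Prop) (s : I × O) : Prop := ∃ f, WinningFrom EI EO acc f s

/-- Projection onto the inputs of the SCC (of the product graph) containing `s`. -/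
def sccProjI {I O : Type*} (EI : I → I → Prop) (EO : O → O → Prop) (s : I × O) : Set I :=
  {i' | ∃ o', SameSCC (prodEdge EI EO) s (i', o')}

/-- Projection onto the outputs of the SCC (of the product graph) containing `s`. -/
def sccProjO {I O : Type*} (EI : I → I → Prop) (EO : O → O → Prop) (s : I × O) : Set O :=
  {o' | ∃ i', SameSCC (prodEdge EI EO) s (i', o')}

/-- An environment strategy: given the history and the system's new output, choose
the new input. -/
abbrev EnvStrat (I O : Type*) := List (I × O) → O → I

/-- A play is consistent with environment strategy gE from state s. -/
def EnvConsistent {I O : Type*} (gE : EnvStrat I O) (s : I × O) (π : ℕ → I × O) : Prop :=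
  π 0 = s ∧ ∀ n, (π (n + 1)).1 = gE (hist π n) (π (n + 1)).2

/-- gE is a winning environment strategy from s: it ensures acc is visited only
finitely often. -/
def EnvWinningFrom {I O : Type*} (EI : I → I → Prop) (EO : O → O → Prop)
    (acc : I × O → Prop) (gE : EnvStrat I O) (s : I × O) : Prop :=
  ∀ π : ℕ → I × O, EnvConsistent gE s π → SysLegal EO π →
    EnvLegal EI π ∧ ∃ N, ∀ n, N ≤ n → ¬ acc (π n)

/-- The environment wins the separated weak Büchi game from s. -/
def EnvWins {I O : Type*} (EI : I → I → Prop) (EO : O → O → Prop)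
    (acc : I × O → Prop) (s : I × O) : Prop := ∃ gE, EnvWinningFrom EI EO acc gE s

/-- indexed finite path of length `ℓ` -/
def FPath {V : Type*} (E : V → V → Prop) (ℓ : ℕ) (x y : V) : Prop :=
  ∃ f : ℕ → V, f 0 = x ∧ f ℓ = y ∧ ∀ k < ℓ, E (f k) (f (k + 1))

section FPathLemmas
variable {V : Type*} {E : V → V → Prop} {x y z : V} {a b ℓ : ℕ}

lemma fpath_refl : FPath E 0 x x := ⟨fun _ => x, rfl, rfl, fun k hk => absurd hk (by omega)⟩

def fcomp {V : Type*} (a : ℕ) (f1 f2 : ℕ → V) : ℕ → V :=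
  fun k => if k ≤ a then f1 k else f2 (k - a)

lemma fcomp_left {f1 f2 : ℕ → V} {k : ℕ} (h : k ≤ a) : fcomp a f1 f2 k = f1 k := if_pos h

lemma fcomp_right {f1 f2 : ℕ → V} {k : ℕ} (hm : f1 a = f2 0) (h : a ≤ k) :
    fcomp a f1 f2 k = f2 (k - a) := by
  rcases eq_or_lt_of_le h with rfl | h'
  · simp [fcomp, hm]
  · exact if_neg (by omega)

lemma fcomp_edges {f1 f2 : ℕ → V} (hm : f1 a = f2 0)
    (h1 : ∀ k < a, E (f1 k) (f1 (k + 1))) (h2 : ∀ k < b, E (f2 k) (f2 (k + 1))) :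
    ∀ k < a + b, E (fcomp a f1 f2 k) (fcomp a f1 f2 (k + 1)) := by
  intro k hk
  by_cases hka : k < a
  · rw [fcomp_left (by omega), fcomp_left (by omega)]; exact h1 k hka
  · rw [fcomp_right hm (by omega), fcomp_right hm (by omega)]
    have : k + 1 - a = (k - a) + 1 := by omega
    rw [this]
    exact h2 (k - a) (by omega)

lemma fpath_trans (h1 : FPath E a x y) (h2 : FPath E b y z) : FPath E (a + b) x z := by
  obtain ⟨f1, hf10, hf1a, hf1E⟩ := h1
  obtain ⟨f2, hf20, hf2b, hf2E⟩ := h2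
  have hm : f1 a = f2 0 := by rw [hf1a, hf20]
  exact ⟨fcomp a f1 f2, by rw [fcomp_left (by omega), hf10],
    by rw [fcomp_right hm (by omega)]; simpa using hf2b,
    fcomp_edges hm hf1E hf2E⟩

lemma fpath_cast (h : a = b) (hp : FPath E a x y) : FPath E b x y := h ▸ hp

lemma fpath_iter (h : FPath E a x x) : ∀ j, FPath E (j * a) x x := by
  intro j
  induction j with
  | zero => exact fpath_cast (by ring) fpath_refl
  | succ j ih => exact fpath_cast (by ring) (fpath_trans ih h)

lemma reach_of_fpath (h : FPath E ℓ x y) : Reach E x y := by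
  induction ℓ generalizing y with
  | zero =>
    obtain ⟨f, h0, hl, _⟩ := h
    have hxy : x = y := by rw [← h0, hl]
    exact hxy ▸ Relation.ReflTransGen.refl
  | succ n ih =>
    obtain ⟨f, h0, hl, hE⟩ := h
    have : Reach E x (f n) := ih ⟨f, h0, rfl, fun k hk => hE k (by omega)⟩
    exact this.tail (hl ▸ hE n (by omega))

lemma fpath_of_reach (h : Reach E x y) : ∃ ℓ, FPath E ℓ x y := by
  induction h with
  | refl => exact ⟨0, fpath_refl⟩
  | @tail b c _ hE ih =>
    obtain ⟨ℓ, f, h0, hl, hfe⟩ := ih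
    refine ⟨ℓ + 1, fun k => if k ≤ ℓ then f k else c, by simpa using h0, by simp, ?_⟩
    intro k hk
    by_cases hkl : k < ℓ
    · simp only [if_pos (by omega : k ≤ ℓ), if_pos (by omega : k + 1 ≤ ℓ)]
      exact hfe k hkl
    · have hke : k = ℓ := by omega
      subst hke
      simp only [if_pos (le_refl k), if_neg (by omega : ¬ k + 1 ≤ k)]
      exact hl ▸ hE

lemma fpath_prod {I O : Type*} {EI : I → I → Prop} {EO : O → O → Prop}
    {x x' : I} {y y' : O} (h1 : FPath EI ℓ x x') (h2 : FPath EO ℓ y y') :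
    FPath (prodEdge EI EO) ℓ (x, y) (x', y') := by
  obtain ⟨f1, a0, a1, aE⟩ := h1
  obtain ⟨f2, b0, b1, bE⟩ := h2
  exact ⟨fun k => (f1 k, f2 k), by simp [a0, b0], by simp [a1, b1],
    fun k hk => ⟨aE k hk, bE k hk⟩⟩

lemma fpath_fst {I O : Type*} {EI : I → I → Prop} {EO : O → O → Prop}
    {x y : I × O} (h : FPath (prodEdge EI EO) ℓ x y) : FPath EI ℓ x.1 y.1 := by
  obtain ⟨f, h0, h1, hE⟩ := h
  exact ⟨fun k => (f k).1, by simp [h0], by simp [h1], fun k hk => (hE k hk).1⟩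

lemma fpath_snd {I O : Type*} {EI : I → I → Prop} {EO : O → O → Prop}
    {x y : I × O} (h : FPath (prodEdge EI EO) ℓ x y) : FPath EO ℓ x.2 y.2 := by
  obtain ⟨f, h0, h1, hE⟩ := h
  exact ⟨fun k => (f k).2, by simp [h0], by simp [h1], fun k hk => (hE k hk).2⟩

end FPathLemmas

lemma sameSCC_refl {V : Type*} {E : V → V → Prop} {x : V} : SameSCC E x x := ⟨.refl, .refl⟩

lemma sameSCC_symm {V : Type*} {E : V → V → Prop} {x y : V} (h : SameSCC E x y) :
    SameSCC E y x := ⟨h.2, h.1⟩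

lemma sameSCC_trans {V : Type*} {E : V → V → Prop} {x y z : V} (h1 : SameSCC E x y)
    (h2 : SameSCC E y z) : SameSCC E x z :=
  ⟨Relation.ReflTransGen.trans h1.1 h2.1, Relation.ReflTransGen.trans h2.2 h1.2⟩

section Walk
variable {I O : Type*} {EI : I → I → Prop} {EO : O → O → Prop} {g : ℕ → I × O} {P : ℕ}

lemma walk_edge (hP : 0 < P) (hgE : ∀ k < P, prodEdge EI EO (g k) (g (k + 1)))
    (hgc : g P = g 0) : ∀ k, prodEdge EI EO (g (k % P)) (g ((k + 1) % P)) := by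
  intro k
  have hr : k % P < P := Nat.mod_lt _ hP
  have hmm : (k + 1) % P = (k % P + 1) % P := (Nat.mod_add_mod k P 1).symm
  rw [hmm]
  have key := hgE (k % P) hr
  by_cases hc : k % P + 1 = P
  · have h0 : (k % P + 1) % P = 0 := by rw [hc, Nat.mod_self]
    rw [h0]
    rw [hc, hgc] at key
    exact key
  · rw [Nat.mod_eq_of_lt (by omega : k % P + 1 < P)]
    exact key

lemma walk_reach_mix (hP : 0 < P) (hgE : ∀ k < P, prodEdge EI EO (g k) (g (k + 1)))
    (hgc : g P = g 0) : ∀ (d x y : ℕ), Reach (prodEdge EI EO)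
      ((g (x % P)).1, (g (y % P)).2) ((g ((x + d) % P)).1, (g ((y + d) % P)).2) := by
  intro d
  induction d with
  | zero => intro x y; exact .refl
  | succ d ih =>
    intro x y
    have he := walk_edge hP hgE hgc
    have h1 : x + (d + 1) = (x + d) + 1 := by omega
    have h2 : y + (d + 1) = (y + d) + 1 := by omega
    rw [h1, h2]
    exact (ih x y).tail ⟨(he (x + d)).1, (he (y + d)).2⟩

lemma walk_sameSCC_mix (hP : 0 < P) (hgE : ∀ k < P, prodEdge EI EO (g k) (g (k + 1)))
    (hgc : g P = g 0) : ∀ (x y d : ℕ), SameSCC (prodEdge EI EO)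
      ((g (x % P)).1, (g (y % P)).2) ((g ((x + d) % P)).1, (g ((y + d) % P)).2) := by
  intro x y d
  refine ⟨walk_reach_mix hP hgE hgc d x y, ?_⟩
  have h2 := walk_reach_mix hP hgE hgc (d * (P - 1)) (x + d) (y + d)
  obtain ⟨p, rfl⟩ : ∃ p, P = p + 1 := ⟨P - 1, by omega⟩
  have e1 : x + d + d * (p + 1 - 1) = x + d * (p + 1) := by simp; ring
  have e2 : y + d + d * (p + 1 - 1) = y + d * (p + 1) := by simp; ring
  rw [e1, e2, Nat.add_mul_mod_self_right, Nat.add_mul_mod_self_right] at h2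
  exact h2

lemma walk_fpath_fst (hP : 0 < P) (hgE : ∀ k < P, prodEdge EI EO (g k) (g (k + 1)))
    (hgc : g P = g 0) : ∀ x ℓ, FPath EI ℓ (g (x % P)).1 (g ((x + ℓ) % P)).1 := by
  intro x ℓ
  refine ⟨fun k => (g ((x + k) % P)).1, rfl, rfl, fun k hk => ?_⟩
  show EI (g ((x + k) % P)).1 (g ((x + (k + 1)) % P)).1
  have h1 : x + (k + 1) = (x + k) + 1 := by omega
  rw [h1]
  exact (walk_edge hP hgE hgc (x + k)).1

lemma walk_fpath_snd (hP : 0 < P) (hgE : ∀ k < P, prodEdge EI EO (g k) (g (k + 1)))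
    (hgc : g P = g 0) : ∀ x ℓ, FPath EO ℓ (g (x % P)).2 (g ((x + ℓ) % P)).2 := by
  intro x ℓ
  refine ⟨fun k => (g ((x + k) % P)).2, rfl, rfl, fun k hk => ?_⟩
  show EO (g ((x + k) % P)).2 (g ((x + (k + 1)) % P)).2
  have h1 : x + (k + 1) = (x + k) + 1 := by omega
  rw [h1]
  exact (walk_edge hP hgE hgc (x + k)).2

end Walk

lemma scc_mix {I O : Type*} {EI : I → I → Prop} {EO : O → O → Prop} {s t : I × O}
    (h : SameSCC (prodEdge EI EO) s t) :
    sccProjI EI EO (s.1, t.2) = sccProjI EI EO s ∧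
    sccProjO EI EO (s.1, t.2) = sccProjO EI EO s := by
  obtain ⟨a, f1, hf10, hf1a, hf1E⟩ := fpath_of_reach h.1
  obtain ⟨b, f2, hf20, hf2b, hf2E⟩ := fpath_of_reach h.2
  by_cases hab : a + b = 0
  · have ha : a = 0 := by omega
    have hts : t = s := by rw [← hf1a, ha, hf10]
    subst hts
    simp
  obtain ⟨p, hP⟩ : ∃ p, a + b = p + 1 := ⟨a + b - 1, by omega⟩
  obtain ⟨g, hgdef⟩ : ∃ g, g = fcomp a f1 f2 := ⟨_, rfl⟩
  have hmid : f1 a = f2 0 := by rw [hf1a, hf20]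
  have hgE : ∀ k < p + 1, prodEdge EI EO (g k) (g (k + 1)) := by
    intro k hk
    rw [hgdef]
    exact fcomp_edges hmid hf1E hf2E k (by omega)
  have hg0 : g 0 = s := by rw [hgdef, fcomp_left (Nat.zero_le a), hf10]
  have hgP : g (p + 1) = s := by
    rw [hgdef, fcomp_right hmid (by omega), show p + 1 - a = b from by omega]
    exact hf2b
  have hgc : g (p + 1) = g 0 := by rw [hgP, hg0]
  have hga : g a = t := by rw [hgdef, fcomp_left (le_refl a)]; exact hf1a
  have hP1 : 0 < p + 1 := Nat.succ_pos p
  have hWa2 : (g (a % (p + 1))).2 = t.2 := by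
    by_cases hb : b = 0
    · have haP : a = p + 1 := by omega
      have hts : t = s := by rw [← hf20, ← hb]; exact hf2b
      rw [haP, Nat.mod_self, hg0, hts]
    · rw [Nat.mod_eq_of_lt (by omega), hga]
  constructor
  · apply Set.Subset.antisymm
    · -- projI u ⊆ projI s
      rintro i' ⟨o', huo⟩
      obtain ⟨α, fpα⟩ := fpath_of_reach huo.1
      obtain ⟨β, fpβ⟩ := fpath_of_reach huo.2
      have pI1 : FPath EI α s.1 i' := fpath_fst fpα
      have pI2 : FPath EI β i' s.1 := fpath_fst fpβ
      have pEI : FPath EI (α + p * (β + α)) s.1 i' :=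
        fpath_trans pI1 (fpath_iter (fpath_trans pI2 pI1) p)
      have pEO : FPath EO (α + p * (β + α)) s.2 (g ((α + p * (β + α)) % (p + 1))).2 := by
        have hw := walk_fpath_snd hP1 hgE hgc 0 (α + p * (β + α))
        simpa [hg0] using hw
      have fwd : FPath (prodEdge EI EO) (α + p * (β + α)) s
          (i', (g ((α + p * (β + α)) % (p + 1))).2) := by
        have := fpath_prod pEI pEO
        simpa using this
      have pEO2 : FPath EO β (g ((α + p * (β + α)) % (p + 1))).2 s.2 := by
        have hw := walk_fpath_snd hP1 hgE hgc (α + p * (β + α)) β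
        rw [show α + p * (β + α) + β = (β + α) * (p + 1) from by ring,
          Nat.mul_mod_left, hg0] at hw
        exact hw
      have bwd : FPath (prodEdge EI EO) β
          (i', (g ((α + p * (β + α)) % (p + 1))).2) s := by
        have := fpath_prod pI2 pEO2
        simpa using this
      exact ⟨_, reach_of_fpath fwd, reach_of_fpath bwd⟩
    · -- projI s ⊆ projI u
      rintro i' ⟨o', hso⟩
      obtain ⟨c, fc, hc0, hcc, hcE⟩ := fpath_of_reach hso.1
      obtain ⟨d, fd, hd0, hdd, hdE⟩ := fpath_of_reach hso.2
      obtain ⟨g2, hg2def⟩ : ∃ g2, g2 = fcomp c fc (fcomp d fd g) := ⟨_, rfl⟩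
      have hmid1 : fc c = (fcomp d fd g) 0 := by
        rw [hcc, fcomp_left (Nat.zero_le d), hd0]
      have hmid2 : fd d = g 0 := by rw [hdd, hg0]
      have hg2E : ∀ k < c + d + (p + 1), prodEdge EI EO (g2 k) (g2 (k + 1)) := by
        intro k hk
        rw [hg2def]
        exact fcomp_edges hmid1 hcE (fcomp_edges hmid2 hdE hgE) k (by omega)
      have hg20 : g2 0 = s := by rw [hg2def, fcomp_left (Nat.zero_le c), hc0]
      have hg2c : g2 c = (i', o') := by rw [hg2def, fcomp_left (le_refl c)]; exact hcc
      have hg2P : g2 (c + d + (p + 1)) = g2 0 := by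
        rw [hg20, hg2def, fcomp_right hmid1 (by omega),
          show c + d + (p + 1) - c = d + (p + 1) from by omega,
          fcomp_right hmid2 (by omega), show d + (p + 1) - d = p + 1 from by omega, hgP]
      have hP2pos : 0 < c + d + (p + 1) := by omega
      have hg2e2 : (g2 ((c + d + a) % (c + d + (p + 1)))).2 = t.2 := by
        by_cases hb : b = 0
        · have hePe : c + d + a = c + d + (p + 1) := by omega
          have hts : t = s := by rw [← hf20, ← hb]; exact hf2b
          rw [hePe, Nat.mod_self, hg20, hts]
        · have hg2e : g2 (c + d + a) = t := by
            rw [hg2def, fcomp_right hmid1 (by omega),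
              show c + d + a - c = d + a from by omega,
              fcomp_right hmid2 (by omega), show d + a - d = a from by omega, hga]
          rw [Nat.mod_eq_of_lt (by omega), hg2e]
      have master := walk_sameSCC_mix hP2pos hg2E hg2P 0 (c + d + a) c
      simp only [Nat.zero_mod, zero_add] at master
      rw [hg20, hg2e2, Nat.mod_eq_of_lt (show c < c + d + (p + 1) from by omega),
        hg2c] at master
      exact ⟨_, by simpa using master⟩
  · apply Set.Subset.antisymm
    · -- projO u ⊆ projO s
      rintro o' ⟨i'', huo⟩
      obtain ⟨α, fpα⟩ := fpath_of_reach huo.1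
      obtain ⟨β, fpβ⟩ := fpath_of_reach huo.2
      have pO1 : FPath EO α t.2 o' := fpath_snd fpα
      have pO2 : FPath EO β o' t.2 := fpath_snd fpβ
      have w1 : FPath EO a s.2 t.2 := by
        have hw := walk_fpath_snd hP1 hgE hgc 0 a
        simp only [Nat.zero_mod, zero_add] at hw
        rw [hg0, hWa2] at hw
        exact hw
      have pEO : FPath EO (a + α + p * (β + α)) s.2 o' :=
        fpath_trans (fpath_trans w1 pO1) (fpath_iter (fpath_trans pO2 pO1) p)
      have pEI : FPath EI (a + α + p * (β + α)) s.1
          (g ((a + α + p * (β + α)) % (p + 1))).1 := by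
        have hw := walk_fpath_fst hP1 hgE hgc 0 (a + α + p * (β + α))
        simpa [hg0] using hw
      have fwd : FPath (prodEdge EI EO) (a + α + p * (β + α)) s
          ((g ((a + α + p * (β + α)) % (p + 1))).1, o') := by
        have := fpath_prod pEI pEO
        simpa using this
      have w2 : FPath EO (a * p) t.2 s.2 := by
        have hw := walk_fpath_snd hP1 hgE hgc a (a * p)
        rw [hWa2, show a + a * p = a * (p + 1) from by ring,
          Nat.mul_mod_left, hg0] at hw
        exact hw
      have pEO2 : FPath EO (β + a * p) o' s.2 := fpath_trans pO2 w2
      have pEI2 : FPath EI (β + a * p) (g ((a + α + p * (β + α)) % (p + 1))).1 s.1 := by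
        have hw := walk_fpath_fst hP1 hgE hgc (a + α + p * (β + α)) (β + a * p)
        rw [show a + α + p * (β + α) + (β + a * p) = (a + β + α) * (p + 1) from by ring,
          Nat.mul_mod_left, hg0] at hw
        exact hw
      have bwd : FPath (prodEdge EI EO) (β + a * p)
          ((g ((a + α + p * (β + α)) % (p + 1))).1, o') s := by
        have := fpath_prod pEI2 pEO2
        simpa using this
      exact ⟨_, reach_of_fpath fwd, reach_of_fpath bwd⟩
    · -- projO s ⊆ projO u
      rintro o' ⟨i'', hso⟩
      obtain ⟨c, fc, hc0, hcc, hcE⟩ := fpath_of_reach hso.1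
      obtain ⟨d, fd, hd0, hdd, hdE⟩ := fpath_of_reach hso.2
      obtain ⟨g2, hg2def⟩ : ∃ g2, g2 = fcomp c fc (fcomp d fd g) := ⟨_, rfl⟩
      have hmid1 : fc c = (fcomp d fd g) 0 := by
        rw [hcc, fcomp_left (Nat.zero_le d), hd0]
      have hmid2 : fd d = g 0 := by rw [hdd, hg0]
      have hg2E : ∀ k < c + d + (p + 1), prodEdge EI EO (g2 k) (g2 (k + 1)) := by
        intro k hk
        rw [hg2def]
        exact fcomp_edges hmid1 hcE (fcomp_edges hmid2 hdE hgE) k (by omega)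
      have hg20 : g2 0 = s := by rw [hg2def, fcomp_left (Nat.zero_le c), hc0]
      have hg2c : g2 c = (i'', o') := by rw [hg2def, fcomp_left (le_refl c)]; exact hcc
      have hg2P : g2 (c + d + (p + 1)) = g2 0 := by
        rw [hg20, hg2def, fcomp_right hmid1 (by omega),
          show c + d + (p + 1) - c = d + (p + 1) from by omega,
          fcomp_right hmid2 (by omega), show d + (p + 1) - d = p + 1 from by omega, hgP]
      have hP2pos : 0 < c + d + (p + 1) := by omega
      have hg2e2 : (g2 ((c + d + a) % (c + d + (p + 1)))).2 = t.2 := by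
        by_cases hb : b = 0
        · have hePe : c + d + a = c + d + (p + 1) := by omega
          have hts : t = s := by rw [← hf20, ← hb]; exact hf2b
          rw [hePe, Nat.mod_self, hg20, hts]
        · have hg2e : g2 (c + d + a) = t := by
            rw [hg2def, fcomp_right hmid1 (by omega),
              show c + d + a - c = d + a from by omega,
              fcomp_right hmid2 (by omega), show d + a - d = a from by omega, hga]
          rw [Nat.mod_eq_of_lt (by omega), hg2e]
      have master := walk_sameSCC_mix hP2pos hg2E hg2P 0 (c + d + a)
        (c + (c + d + a) * (c + d + p))
      simp only [Nat.zero_mod, zero_add] at master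
      rw [hg20, hg2e2,
        show c + d + a + (c + (c + d + a) * (c + d + p))
            = c + (c + d + a) * (c + d + (p + 1)) from by ring,
        Nat.add_mul_mod_self_right,
        Nat.mod_eq_of_lt (show c < c + d + (p + 1) from by omega), hg2c] at master
      exact ⟨_, by simpa using master⟩

lemma reach_play {V : Type*} {E : V → V → Prop} {σ : ℕ → V}
    (hσ : ∀ k, E (σ k) (σ (k + 1))) {a b : ℕ} (hab : a ≤ b) : Reach E (σ a) (σ b) := by
  induction b with
  | zero => have : a = 0 := by omega
            exact this ▸ Relation.ReflTransGen.refl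
  | succ n ih =>
    rcases Nat.lt_or_ge a (n + 1) with hl | hg
    · exact (ih (by omega)).tail (hσ n)
    · have : a = n + 1 := by omega
      exact this ▸ Relation.ReflTransGen.refl

lemma eventually_same_scc {V : Type*} [Fintype V] (E : V → V → Prop) (σ : ℕ → V)
    (hσ : ∀ k, E (σ k) (σ (k + 1))) : ∃ T, ∀ k, T ≤ k → SameSCC E (σ T) (σ k) := by
  classical
  set F : ℕ → Finset V := fun k => Finset.univ.filter (fun v => Reach E (σ k) v) with hF
  have hmono : ∀ a b, a ≤ b → F b ⊆ F a := by
    intro a b hab v hv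
    simp only [hF, Finset.mem_filter, Finset.mem_univ, true_and] at hv ⊢
    exact Relation.ReflTransGen.trans (reach_play hσ hab) hv
  have hne : (Set.range fun k => (F k).card).Nonempty := ⟨(F 0).card, 0, rfl⟩
  obtain ⟨T, hT⟩ := Nat.sInf_mem hne
  change (F T).card = _ at hT
  refine ⟨T, fun k hk => ?_⟩
  have hsub : F k ⊆ F T := hmono T k hk
  have hcard : (F T).card ≤ (F k).card := by
    rw [hT]
    exact Nat.sInf_le ⟨k, rfl⟩
  have heq : F k = F T := Finset.eq_of_subset_of_card_le hsub hcard
  have hmem : σ T ∈ F T := by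
    simp only [hF, Finset.mem_filter, Finset.mem_univ, true_and]
    exact Relation.ReflTransGen.refl
  have : σ T ∈ F k := heq ▸ hmem
  simp only [hF, Finset.mem_filter, Finset.mem_univ, true_and] at this
  exact ⟨reach_play hσ hk, this⟩

section Simulation
variable {I O : Type*}

def simListD (gE : EnvStrat I O) (i0 : I) (so : ℕ → O) : ℕ → List (I × O)
  | 0 => [(i0, so 0)]
  | (k + 1) => simListD gE i0 so k ++
      [(gE (simListD gE i0 so k) (so (k + 1)), so (k + 1))]

def simP (gE : EnvStrat I O) (i0 : I) (so : ℕ → O) (k : ℕ) : I × O :=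
  (simListD gE i0 so k).getLastD (i0, so 0)

lemma hist_zero (π : ℕ → I × O) : hist π 0 = [π 0] := by simp [hist, List.range_succ]

lemma hist_succ (π : ℕ → I × O) (k : ℕ) : hist π (k + 1) = hist π k ++ [π (k + 1)] := by
  simp [hist, List.range_succ]

lemma simP_zero (gE : EnvStrat I O) (i0 : I) (so : ℕ → O) : simP gE i0 so 0 = (i0, so 0) := by
  simp [simP, simListD]

lemma simP_succ (gE : EnvStrat I O) (i0 : I) (so : ℕ → O) (k : ℕ) :
    simP gE i0 so (k + 1) = (gE (simListD gE i0 so k) (so (k + 1)), so (k + 1)) := by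
  simp [simP, simListD]

lemma hist_simP (gE : EnvStrat I O) (i0 : I) (so : ℕ → O) (k : ℕ) :
    hist (simP gE i0 so) k = simListD gE i0 so k := by
  induction k with
  | zero => rw [hist_zero, simP_zero]; rfl
  | succ k ih => rw [hist_succ, ih, simP_succ]; rfl

lemma simP_snd (gE : EnvStrat I O) (i0 : I) (so : ℕ → O) (k : ℕ) :
    (simP gE i0 so k).2 = so k := by
  cases k with
  | zero => rw [simP_zero]
  | succ k => rw [simP_succ]

lemma simP_consistent (gE : EnvStrat I O) (i0 : I) (so : ℕ → O) :
    EnvConsistent gE (i0, so 0) (simP gE i0 so) := by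
  refine ⟨simP_zero gE i0 so, fun k => ?_⟩
  rw [hist_simP, simP_snd, simP_succ]

lemma simListD_congr (gE : EnvStrat I O) (i0 : I) {so so' : ℕ → O} {k : ℕ}
    (h : ∀ j ≤ k, so j = so' j) : simListD gE i0 so k = simListD gE i0 so' k := by
  induction k with
  | zero => simp [simListD, h 0 (le_refl 0)]
  | succ k ih =>
    have h' : ∀ j ≤ k, so j = so' j := fun j hj => h j (by omega)
    simp only [simListD, ih h', h (k + 1) (le_refl (k + 1))]

lemma simP_congr (gE : EnvStrat I O) (i0 : I) {so so' : ℕ → O} {k : ℕ}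
    (h : ∀ j ≤ k, so j = so' j) : simP gE i0 so k = simP gE i0 so' k := by
  unfold simP
  rw [simListD_congr gE i0 h, h 0 (Nat.zero_le k)]

def mixO (n : ℕ) (p out : ℕ → O) : ℕ → O := fun k => if k ≤ n then p k else out (k - n)

def realI (gE : EnvStrat I O) (i0 : I) (m : ℕ) (q : ℕ → I) (n : ℕ) (p : ℕ → O)
    (out : ℕ → O) (t : ℕ) : I :=
  if t ≤ m then q t else (simP gE i0 (mixO n p out) (t - m)).1

lemma realI_congr (gE : EnvStrat I O) (i0 : I) (m : ℕ) (q : ℕ → I) (n : ℕ) (p : ℕ → O)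
    {out out' : ℕ → O} {t : ℕ} (h : ∀ j ≤ t, out j = out' j) :
    realI gE i0 m q n p out t = realI gE i0 m q n p out' t := by
  unfold realI
  by_cases htm : t ≤ m
  · rw [if_pos htm, if_pos htm]
  · rw [if_neg htm, if_neg htm]
    have hmix : ∀ j ≤ t - m, mixO n p out j = mixO n p out' j := by
      intro j hj
      unfold mixO
      by_cases hjn : j ≤ n
      · rw [if_pos hjn, if_pos hjn]
      · rw [if_neg hjn, if_neg hjn]
        exact h (j - n) (by omega)
    rw [simP_congr gE i0 hmix]

def gNew (gE : EnvStrat I O) (i0 : I) (m : ℕ) (q : ℕ → I) (n : ℕ) (p : ℕ → O) :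
    EnvStrat I O :=
  fun h b => realI gE i0 m q n p
    (fun k => if k < h.length then (h.getD k (i0, b)).2 else b) h.length

lemma hist_length (π : ℕ → I × O) (t : ℕ) : (hist π t).length = t + 1 := by simp [hist]

lemma hist_getD (π : ℕ → I × O) (t k : ℕ) (hk : k ≤ t) (d : I × O) :
    (hist π t).getD k d = π k := by
  have hlt : k < (hist π t).length := by rw [hist_length]; omega
  rw [List.getD_eq_getElem _ _ hlt]
  simp [hist]

end Simulation

/-- Symmetric delay property: in a separated weak Büchi game, if the environment
wins from (i0, o0), there is a path from o0 to o_n in G_O and a path from i_{-m}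
to i0 in G_I, then the environment wins from (i_{-m}, o_n). -/
theorem env_delay_property {I O : Type*} [Fintype I] [Fintype O]
    (EI : I → I → Prop) (EO : O → O → Prop) (acc : I × O → Prop)
    (hUnion : ∀ s t, SameSCC (prodEdge EI EO) s t → (acc s ↔ acc t))
    (hProj : ∀ s t, sccProjI EI EO s = sccProjI EI EO t →
      sccProjO EI EO s = sccProjO EI EO t → (acc s ↔ acc t))
    (i0 iM : I) (o0 oN : O)
    (hO : Reach EO o0 oN) (hI : Reach EI iM i0)
    (hwin : EnvWins EI EO acc (i0, o0)) :
    EnvWins EI EO acc (iM, oN) := by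
  obtain ⟨gE, hgE⟩ := hwin
  obtain ⟨n, p, hp0, hpn, hpE⟩ := fpath_of_reach hO
  obtain ⟨m, q, hq0, hqm, hqE⟩ := fpath_of_reach hI
  refine ⟨gNew gE i0 m q n p, ?_⟩
  intro π hcons hsys
  obtain ⟨out, houtdef⟩ : ∃ f : ℕ → O, f = fun k => (π k).2 := ⟨_, rfl⟩
  obtain ⟨so, hsodef⟩ : ∃ f : ℕ → O, f = mixO n p out := ⟨_, rfl⟩
  obtain ⟨σ, hσdef⟩ : ∃ f : ℕ → I × O, f = simP gE i0 so := ⟨_, rfl⟩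
  have hπ0 : π 0 = (iM, oN) := hcons.1
  have hout_eq : ∀ k, out k = (π k).2 := fun k => by rw [houtdef]
  -- the play's inputs are given by realI
  have hA : ∀ t, (π t).1 = realI gE i0 m q n p out t := by
    intro t
    cases t with
    | zero =>
      rw [hπ0]
      unfold realI
      rw [if_pos (Nat.zero_le m), hq0]
    | succ t =>
      rw [hcons.2 t]
      show gNew gE i0 m q n p (hist π t) (π (t + 1)).2 = realI gE i0 m q n p out (t + 1)
      unfold gNew
      rw [hist_length]
      apply realI_congr
      intro j hj
      by_cases hjt : j < t + 1
      · rw [if_pos hjt, hist_getD π t j (by omega), hout_eq]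
      · rw [if_neg hjt]
        have hj' : j = t + 1 := by omega
        rw [hj', hout_eq]
  have hso0 : so 0 = o0 := by
    rw [hsodef]
    unfold mixO
    rw [if_pos (Nat.zero_le n), hp0]
  have hσcons : EnvConsistent gE (i0, o0) σ := by
    rw [hσdef, ← hso0]
    exact simP_consistent gE i0 so
  have hσ_snd : ∀ k, (σ k).2 = so k := fun k => by rw [hσdef]; exact simP_snd gE i0 so k
  have hσsys : SysLegal EO σ := by
    intro k
    rw [hσ_snd, hσ_snd, hsodef]
    unfold mixO
    by_cases h1 : k + 1 ≤ n
    · rw [if_pos (by omega : k ≤ n), if_pos h1]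
      exact hpE k (by omega)
    · rw [if_neg h1]
      by_cases h2 : k ≤ n
      · have hk : k = n := by omega
        rw [if_pos h2, show k + 1 - n = 1 from by omega, hout_eq,
          show p k = oN from by rw [hk, hpn]]
        have h0 := hsys 0
        rw [hπ0] at h0
        exact h0
      · rw [if_neg h2, show k + 1 - n = (k - n) + 1 from by omega, hout_eq, hout_eq]
        exact hsys (k - n)
  obtain ⟨hσenv, N0, hN0⟩ := hgE σ hσcons hσsys
  have hσedge : ∀ k, prodEdge EI EO (σ k) (σ (k + 1)) := fun k => ⟨hσenv k, hσsys k⟩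
  have hσ0 : σ 0 = (i0, o0) := hσcons.1
  constructor
  · -- EnvLegal π
    intro t
    rw [hA t, hA (t + 1)]
    unfold realI
    by_cases h1 : t + 1 ≤ m
    · rw [if_pos (by omega : t ≤ m), if_pos h1]
      exact hqE t (by omega)
    · rw [if_neg h1]
      by_cases h2 : t ≤ m
      · have ht : t = m := by omega
        rw [if_pos h2, show t + 1 - m = 1 from by omega,
          show q t = i0 from by rw [ht, hqm]]
        have h0 : (σ 0).1 = i0 := by rw [hσ0]
        have he := hσenv 0
        rw [h0, hσdef, hsodef] at he
        exact he
      · rw [if_neg h2, show t + 1 - m = (t - m) + 1 from by omega]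
        have he := hσenv (t - m)
        rw [hσdef, hsodef] at he
        exact he
  · -- acceptance only finitely often
    obtain ⟨T, hT⟩ := eventually_same_scc (prodEdge EI EO) σ hσedge
    refine ⟨m + n + T + N0 + 1, fun t ht => ?_⟩
    have hscc : SameSCC (prodEdge EI EO) (σ (t - m)) (σ (t + n)) :=
      sameSCC_trans (sameSCC_symm (hT (t - m) (by omega))) (hT (t + n) (by omega))
    have hmix := scc_mix hscc
    have hπt : π t = ((σ (t - m)).1, (σ (t + n)).2) := by
      have hfst : (π t).1 = (σ (t - m)).1 := by
        rw [hA t]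
        unfold realI
        rw [if_neg (by omega : ¬ t ≤ m), hσdef, hsodef]
      have hsnd : (π t).2 = (σ (t + n)).2 := by
        rw [hσ_snd, hsodef]
        unfold mixO
        rw [if_neg (by omega : ¬ t + n ≤ n), show t + n - n = t from by omega, hout_eq]
      exact Prod.ext hfst hsnd
    have hacc : acc (π t) ↔ acc (σ (t - m)) := by
      apply hProj
      · rw [hπt]; exact hmix.1
      · rw [hπt]; exact hmix.2
    intro hacct
    exact hN0 (t - m) (by omega) (hacc.mp hacct)
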